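/- arXiv:1109.4173 — 3 statements merged into one kernel-verified Lean document; each statement's English description precedes it below -/
import Mathlib

section
/- Let X, Y1, Y2 be finite sets of complex numbers with |Y1| ≥ 2 and |Y2| ≥ 2 such that (X, Y1) and (X, Y2) are uniquely factorable constellation pairs. Then for any two distinct triples (x, y1, y2) ≠ (x̂, ŷ1, ŷ2) in X × Y1 × Y2, the 4×4 complex matrix (U(x, y1, y2) | U(x̂, ŷ1, ŷ2)), obtained by juxtaposing the columns of the two codeword matrices, is invertible; equivalently, the Gram matrix R = (U | Û)^H (U | Û) is nonsingular. (This is the algebraic condition guaranteeing full diversity of the code for the noncoherent ML receiver.) -/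
/-- A pair `(X, Y)` of sets of complex numbers is a uniquely factorable
constellation pair (UFCP) if `x * y' = x' * y` with `x, x' ∈ X` and
`y, y' ∈ Y` implies `x = x'` and `y = y'`. -/
def IsUFCP (X Y : Set ℂ) : Prop :=
  ∀ x ∈ X, ∀ x' ∈ X, ∀ y ∈ Y, ∀ y' ∈ Y, x * y' = x' * y → x = x' ∧ y = y'

/-- The normalized `4 × 2` unitary UFCP space-time codeword matrix
`U(x, y₁, y₂)`. -/
noncomputable def Umat (x y1 y2 : ℂ) : Matrix (Fin 4) (Fin 2) ℂ :=
  (((Real.sqrt (‖x‖ ^ 2 + ‖y1‖ ^ 2 + ‖y2‖ ^ 2))⁻¹ : ℝ) : ℂ) •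
    !![x, 0; 0, starRingEnd ℂ x; y1, y2; -(starRingEnd ℂ y2), starRingEnd ℂ y1]

/-- The `4 × 4` matrix `(A | B)` obtained by juxtaposing the columns of two
`4 × 2` matrices. -/
def juxt (A B : Matrix (Fin 4) (Fin 2) ℂ) : Matrix (Fin 4) (Fin 4) ℂ :=
  Matrix.of fun i j =>
    if h : (j : ℕ) < 2 then A i ⟨(j : ℕ), h⟩ else B i ⟨(j : ℕ) - 2, by omega⟩

/-!
The determinant of `(U | Û)` is `(|x ŷ₁ - x̂ y₁|² + |x̄ ŷ₂ - conj(x̂) y₂|²) / (N N̂)`, with `N`, `N̂`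
the squared norms of the two triples. Since `Y₁` has two points, unique factorization forces
`0 ∉ X`, so `N, N̂ > 0`; and the first term vanishes only when `x = x̂`, `y₁ = ŷ₁`, in which case
the second is `|x|² |ŷ₂ - y₂|² > 0`. The Gram matrix is then `(U | Û)ᴴ (U | Û)`, a product of units.
-/

open ComplexConjugate Matrix

lemma IsUFCP.ne_zero {X Y : Set ℂ} (h : IsUFCP X Y) (hY : Y.Nontrivial) {x : ℂ} (hx : x ∈ X) :
    x ≠ 0 := by
  obtain ⟨a, ha, b, hb, hab⟩ := hY
  rintro rfl
  exact hab (h 0 hx 0 hx a ha b hb (by simp)).2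

lemma IsUFCP.sub_ne_zero_or_of_ne {X Y : Set ℂ} (h : IsUFCP X Y) {x x' y y' z z' : ℂ}
    (hx : x ∈ X) (hx' : x' ∈ X) (hy : y ∈ Y) (hy' : y' ∈ Y) (hx0 : x ≠ 0)
    (hne : (x, y, z) ≠ (x', y', z')) :
    x * y' - x' * y ≠ 0 ∨ conj x * z' - conj x' * z ≠ 0 := by
  rw [or_iff_not_imp_left, not_not, sub_eq_zero]
  intro hxy
  obtain ⟨rfl, rfl⟩ := h x hx x' hx' y hy y' hy' hxy
  have hz : z ≠ z' := fun hz => hne (by rw [hz])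
  rw [← mul_sub]
  exact mul_ne_zero ((map_ne_zero _).mpr hx0) (sub_ne_zero.mpr hz.symm)

lemma juxt_smul (c d : ℂ) (A B : Matrix (Fin 4) (Fin 2) ℂ) :
    juxt (c • A) (d • B) = juxt A B * diagonal ![c, c, d, d] := by
  ext i j
  fin_cases j <;> simp [juxt, mul_comm]

lemma det_juxt_smul (c d : ℂ) (A B : Matrix (Fin 4) (Fin 2) ℂ) :
    (juxt (c • A) (d • B)).det = c ^ 2 * d ^ 2 * (juxt A B).det := by
  rw [juxt_smul, det_mul, det_diagonal, Fin.prod_univ_four]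
  simp
  ring

lemma det_juxt_codeword (x y1 y2 x' y1' y2' : ℂ) :
    (juxt !![x, 0; 0, conj x; y1, y2; -conj y2, conj y1]
      !![x', 0; 0, conj x'; y1', y2'; -conj y2', conj y1']).det =
      Complex.normSq (x * y1' - x' * y1) + Complex.normSq (conj x * y2' - conj x' * y2) := by
  rw [det_succ_row_zero]
  simp [Fin.sum_univ_succ, det_fin_three, juxt, Fin.succAbove, Complex.normSq_eq_conj_mul_self]
  ring

lemma det_juxt_Umat (x y1 y2 x' y1' y2' : ℂ) :
    (juxt (Umat x y1 y2) (Umat x' y1' y2')).det =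
      ((Complex.normSq (x * y1' - x' * y1) + Complex.normSq (conj x * y2' - conj x' * y2)) /
        ((‖x‖ ^ 2 + ‖y1‖ ^ 2 + ‖y2‖ ^ 2) * (‖x'‖ ^ 2 + ‖y1'‖ ^ 2 + ‖y2'‖ ^ 2)) : ℝ) := by
  rw [Umat, Umat, det_juxt_smul, det_juxt_codeword, ← Complex.ofReal_pow, ← Complex.ofReal_pow,
    inv_pow, inv_pow, Real.sq_sqrt (by positivity), Real.sq_sqrt (by positivity)]
  push_cast
  rw [div_eq_mul_inv, mul_inv]
  ring

lemma det_juxt_Umat_ne_zero {x y1 y2 x' y1' y2' : ℂ} (hx : x ≠ 0) (hx' : x' ≠ 0)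
    (h : x * y1' - x' * y1 ≠ 0 ∨ conj x * y2' - conj x' * y2 ≠ 0) :
    (juxt (Umat x y1 y2) (Umat x' y1' y2')).det ≠ 0 := by
  have hnum :
      0 < Complex.normSq (x * y1' - x' * y1) + Complex.normSq (conj x * y2' - conj x' * y2) := by
    rcases h with h | h
    · exact add_pos_of_pos_of_nonneg (Complex.normSq_pos.mpr h) (Complex.normSq_nonneg _)
    · exact add_pos_of_nonneg_of_pos (Complex.normSq_nonneg _) (Complex.normSq_pos.mpr h)
  have hN : 0 < ‖x‖ := norm_pos_iff.mpr hx
  have hN' : 0 < ‖x'‖ := norm_pos_iff.mpr hx'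
  rw [det_juxt_Umat, Complex.ofReal_ne_zero]
  positivity

theorem ufcp_full_diversity_general (X Y1 : Finset ℂ)
    (hY1 : 2 ≤ Y1.card)
    (h1 : IsUFCP (X : Set ℂ) (Y1 : Set ℂ))
    (x x' y1 y1' y2 y2' : ℂ)
    (hx : x ∈ X) (hx' : x' ∈ X) (hy1 : y1 ∈ Y1) (hy1' : y1' ∈ Y1)
    (hne : (x, y1, y2) ≠ (x', y1', y2')) :
    IsUnit (juxt (Umat x y1 y2) (Umat x' y1' y2')) ∧
    IsUnit ((juxt (Umat x y1 y2) (Umat x' y1' y2')).conjTranspose *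
      juxt (Umat x y1 y2) (Umat x' y1' y2')) := by
  have hY : (Y1 : Set ℂ).Nontrivial := Finset.one_lt_card_iff_nontrivial.mp hY1
  have hx0 : x ≠ 0 := h1.ne_zero hY (Finset.mem_coe.mpr hx)
  have hx'0 : x' ≠ 0 := h1.ne_zero hY (Finset.mem_coe.mpr hx')
  have hdet := det_juxt_Umat_ne_zero hx0 hx'0 (h1.sub_ne_zero_or_of_ne hx hx' hy1 hy1' hx0 hne)
  have hu : IsUnit (juxt (Umat x y1 y2) (Umat x' y1' y2')) :=
    (isUnit_iff_isUnit_det _).mpr (isUnit_iff_ne_zero.mpr hdet)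
  exact ⟨hu, hu.star.mul hu⟩

/-- Full-diversity condition: for any two distinct triples of signals, the
`4 × 4` matrix obtained by juxtaposing the two codeword matrices is
invertible; equivalently, the Gram matrix `(U | Û)ᴴ (U | Û)` is nonsingular. -/
theorem ufcp_full_diversity (X Y1 Y2 : Finset ℂ)
    (hY1 : 2 ≤ Y1.card) (hY2 : 2 ≤ Y2.card)
    (h1 : IsUFCP (X : Set ℂ) (Y1 : Set ℂ)) (h2 : IsUFCP (X : Set ℂ) (Y2 : Set ℂ))
    (x x' y1 y1' y2 y2' : ℂ)
    (hx : x ∈ X) (hx' : x' ∈ X) (hy1 : y1 ∈ Y1) (hy1' : y1' ∈ Y1)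
    (hy2 : y2 ∈ Y2) (hy2' : y2' ∈ Y2)
    (hne : (x, y1, y2) ≠ (x', y1', y2')) :
    IsUnit (juxt (Umat x y1 y2) (Umat x' y1' y2')) ∧
    IsUnit ((juxt (Umat x y1 y2) (Umat x' y1' y2')).conjTranspose *
      juxt (Umat x y1 y2) (Umat x' y1' y2')) :=
  ufcp_full_diversity_general X Y1 hY1 h1 x x' y1 y1' y2 y2' hx hx' hy1 hy1' hne
end

section
/- Let u ≥ v ≥ 2 be integers, let w = u + v, and let (ũ, ṽ) be the balanced split of w. Then the following four inequalities hold: (1) E(u) + E(v) ≥ E(ũ) + E(ṽ); (2) √(E(u)+E_s(v)) + √(E(u)+E_t(v)) ≥ √(E(ũ)+E_s(ṽ)) + √(E(ũ)+E_t(ṽ)); (3) √(E(u)+E(v)) + √(E(u)+E_s(v)) ≥ √(E(ũ)+E(ṽ)) + √(E(ũ)+E_s(ṽ)); (4) √(E(u)+E_s(v)) + √(E(v)+E_s(u)) ≥ √(E(ũ)+E_s(ṽ)) + √(E(ṽ)+E_s(ũ)). -/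
/-- `Eng K` is the largest squared modulus of a point of the modified
`2^K`-ary QAM constellation. -/
noncomputable def Eng (K : ℕ) : ℝ :=
  if K = 2 then 2
  else if K = 3 then 10
  else if K % 2 = 0 then 2 * ((2 : ℝ) ^ (K / 2) - 1) ^ 2
  else ((2 : ℝ) ^ ((K - 1) / 2) - 1) ^ 2 + (3 * (2 : ℝ) ^ ((K - 3) / 2) - 1) ^ 2

/-- `EngS K` is the larger squared modulus among the nearest neighbors of a
largest-energy corner point of the modified `2^K`-ary QAM constellation
(with the convention `EngS 2 = EngS 3 = 2`). -/
noncomputable def EngS (K : ℕ) : ℝ :=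
  if K = 2 then 2
  else if K = 3 then 2
  else if K % 2 = 0 then ((2 : ℝ) ^ (K / 2) - 1) ^ 2 + ((2 : ℝ) ^ (K / 2) - 3) ^ 2
  else ((2 : ℝ) ^ ((K - 1) / 2) - 3) ^ 2 + (3 * (2 : ℝ) ^ ((K - 3) / 2) - 1) ^ 2

/-- `EngT K` is the smaller squared modulus among the nearest neighbors of a
largest-energy corner point of the modified `2^K`-ary QAM constellation
(with the convention `EngT 2 = EngT 3 = 2`). -/
noncomputable def EngT (K : ℕ) : ℝ :=
  if K = 2 then 2
  else if K = 3 then 2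
  else if K % 2 = 0 then ((2 : ℝ) ^ (K / 2) - 1) ^ 2 + ((2 : ℝ) ^ (K / 2) - 3) ^ 2
  else ((2 : ℝ) ^ ((K - 1) / 2) - 1) ^ 2 + (3 * (2 : ℝ) ^ ((K - 3) / 2) - 3) ^ 2

section Aux

private lemma eng_even (n : ℕ) : Eng (2*n+4) = 2*((2:ℝ)^(n+2) - 1)^2 := by
  unfold Eng
  rw [if_neg (by omega), if_neg (by omega), if_pos (by omega),
    show (2*n+4)/2 = n+2 from by omega]

private lemma eng_odd (n : ℕ) : Eng (2*n+5) = ((2:ℝ)^(n+2) - 1)^2 + (3*(2:ℝ)^(n+1) - 1)^2 := by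
  unfold Eng
  rw [if_neg (by omega), if_neg (by omega), if_neg (by omega),
    show (2*n+5-1)/2 = n+2 from by omega, show (2*n+5-3)/2 = n+1 from by omega]

private lemma engS_even (n : ℕ) : EngS (2*n+4) = ((2:ℝ)^(n+2) - 1)^2 + ((2:ℝ)^(n+2) - 3)^2 := by
  unfold EngS
  rw [if_neg (by omega), if_neg (by omega), if_pos (by omega),
    show (2*n+4)/2 = n+2 from by omega]

private lemma engS_odd (n : ℕ) : EngS (2*n+5) = ((2:ℝ)^(n+2) - 3)^2 + (3*(2:ℝ)^(n+1) - 1)^2 := by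
  unfold EngS
  rw [if_neg (by omega), if_neg (by omega), if_neg (by omega),
    show (2*n+5-1)/2 = n+2 from by omega, show (2*n+5-3)/2 = n+1 from by omega]

private lemma engT_even (n : ℕ) : EngT (2*n+4) = ((2:ℝ)^(n+2) - 1)^2 + ((2:ℝ)^(n+2) - 3)^2 := by
  unfold EngT
  rw [if_neg (by omega), if_neg (by omega), if_pos (by omega),
    show (2*n+4)/2 = n+2 from by omega]

private lemma engT_odd (n : ℕ) : EngT (2*n+5) = ((2:ℝ)^(n+2) - 1)^2 + (3*(2:ℝ)^(n+1) - 3)^2 := by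
  unfold EngT
  rw [if_neg (by omega), if_neg (by omega), if_neg (by omega),
    show (2*n+5-1)/2 = n+2 from by omega, show (2*n+5-3)/2 = n+1 from by omega]

private lemma eng2 : Eng 2 = 2 := by norm_num [Eng]
private lemma eng3 : Eng 3 = 10 := by norm_num [Eng]
private lemma eng4 : Eng 4 = 18 := by have := eng_even 0; norm_num at this ⊢; linarith
private lemma eng5 : Eng 5 = 34 := by have := eng_odd 0; norm_num at this ⊢; linarith
private lemma engS2 : EngS 2 = 2 := by norm_num [EngS]
private lemma engS3 : EngS 3 = 2 := by norm_num [EngS]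
private lemma engS4 : EngS 4 = 10 := by have := engS_even 0; norm_num at this ⊢; linarith
private lemma engS5 : EngS 5 = 26 := by have := engS_odd 0; norm_num at this ⊢; linarith
private lemma engT2 : EngT 2 = 2 := by norm_num [EngT]
private lemma engT3 : EngT 3 = 2 := by norm_num [EngT]
private lemma engT4 : EngT 4 = 10 := by have := engT_even 0; norm_num at this ⊢; linarith
private lemma engT5 : EngT 5 = 18 := by have := engT_odd 0; norm_num at this ⊢; linarith

private lemma cases4 (K : ℕ) (hK : 2 ≤ K) :
    K = 2 ∨ K = 3 ∨ (∃ n, K = 2*n+4) ∨ (∃ n, K = 2*n+5) := by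
  rcases Nat.even_or_odd K with ⟨m, hm⟩ | ⟨m, hm⟩
  · rcases Nat.lt_or_ge m 2 with h | h
    · left; omega
    · right; right; left; exact ⟨m - 2, by omega⟩
  · rcases Nat.lt_or_ge m 2 with h | h
    · right; left; omega
    · right; right; right; exact ⟨m - 2, by omega⟩

private lemma y_ge (n : ℕ) : (2:ℝ) ≤ (2:ℝ)^(n+1) := by
  calc (2:ℝ) = 2^1 := by norm_num
  _ ≤ 2^(n+1) := by
      apply pow_le_pow_right₀ (by norm_num); omega


-- L1: convexity of Eng
private lemma L1 (K : ℕ) (hK : 2 ≤ K) :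
    Eng (K+1) - Eng K ≤ Eng (K+2) - Eng (K+1) := by
  rcases cases4 K hK with rfl | rfl | ⟨n, rfl⟩ | ⟨n, rfl⟩
  · rw [eng2, eng3, eng4]; norm_num
  · rw [eng3, eng4, eng5]; norm_num
  · rw [show 2*n+4+1 = 2*n+5 from rfl, show 2*n+4+2 = 2*(n+1)+4 from by ring,
      eng_even, eng_odd, eng_even]
    have hy := y_ge n
    simp only [show (2:ℝ)^(n+1+2) = 4*2^(n+1) from by ring,
      show (2:ℝ)^(n+1+1) = 2*2^(n+1) from by ring,
      show (2:ℝ)^(n+2) = 2*2^(n+1) from by ring,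
      show (2:ℝ)^(n+3) = 4*2^(n+1) from by ring]
    nlinarith [sq_nonneg ((2:ℝ)^(n+1))]
  · rw [show 2*n+5+1 = 2*(n+1)+4 from by ring, show 2*n+5+2 = 2*(n+1)+5 from by ring,
      eng_odd, eng_even, eng_odd]
    have hy := y_ge n
    simp only [show (2:ℝ)^(n+1+2) = 4*2^(n+1) from by ring,
      show (2:ℝ)^(n+1+1) = 2*2^(n+1) from by ring,
      show (2:ℝ)^(n+2) = 2*2^(n+1) from by ring,
      show (2:ℝ)^(n+3) = 4*2^(n+1) from by ring]
    nlinarith [sq_nonneg ((2:ℝ)^(n+1))]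

-- L2: EngS(K+1) - EngS K ≤ Eng(K+2) - Eng(K+1)
private lemma L2 (K : ℕ) (hK : 2 ≤ K) :
    EngS (K+1) - EngS K ≤ Eng (K+2) - Eng (K+1) := by
  rcases cases4 K hK with rfl | rfl | ⟨n, rfl⟩ | ⟨n, rfl⟩
  · rw [engS2, engS3, eng3, eng4]; norm_num
  · rw [engS3, engS4, eng4, eng5]; norm_num
  · rw [show 2*n+4+1 = 2*n+5 from rfl, show 2*n+4+2 = 2*(n+1)+4 from by ring,
      engS_even, engS_odd, eng_odd, eng_even]
    have hy := y_ge n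
    simp only [show (2:ℝ)^(n+1+2) = 4*2^(n+1) from by ring,
      show (2:ℝ)^(n+1+1) = 2*2^(n+1) from by ring,
      show (2:ℝ)^(n+2) = 2*2^(n+1) from by ring,
      show (2:ℝ)^(n+3) = 4*2^(n+1) from by ring]
    nlinarith [sq_nonneg ((2:ℝ)^(n+1))]
  · rw [show 2*n+5+1 = 2*(n+1)+4 from by ring, show 2*n+5+2 = 2*(n+1)+5 from by ring,
      engS_odd, engS_even, eng_even, eng_odd]
    have hy := y_ge n
    simp only [show (2:ℝ)^(n+1+2) = 4*2^(n+1) from by ring,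
      show (2:ℝ)^(n+1+1) = 2*2^(n+1) from by ring,
      show (2:ℝ)^(n+2) = 2*2^(n+1) from by ring,
      show (2:ℝ)^(n+3) = 4*2^(n+1) from by ring]
    nlinarith [sq_nonneg ((2:ℝ)^(n+1))]

-- L3: EngT(K+1) - EngT K ≤ Eng(K+2) - Eng(K+1)
private lemma L3 (K : ℕ) (hK : 2 ≤ K) :
    EngT (K+1) - EngT K ≤ Eng (K+2) - Eng (K+1) := by
  rcases cases4 K hK with rfl | rfl | ⟨n, rfl⟩ | ⟨n, rfl⟩
  · rw [engT2, engT3, eng3, eng4]; norm_num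
  · rw [engT3, engT4, eng4, eng5]; norm_num
  · rw [show 2*n+4+1 = 2*n+5 from rfl, show 2*n+4+2 = 2*(n+1)+4 from by ring,
      engT_even, engT_odd, eng_odd, eng_even]
    have hy := y_ge n
    simp only [show (2:ℝ)^(n+1+2) = 4*2^(n+1) from by ring,
      show (2:ℝ)^(n+1+1) = 2*2^(n+1) from by ring,
      show (2:ℝ)^(n+2) = 2*2^(n+1) from by ring,
      show (2:ℝ)^(n+3) = 4*2^(n+1) from by ring]
    nlinarith [sq_nonneg ((2:ℝ)^(n+1))]
  · rw [show 2*n+5+1 = 2*(n+1)+4 from by ring, show 2*n+5+2 = 2*(n+1)+5 from by ring,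
      engT_odd, engT_even, eng_even, eng_odd]
    have hy := y_ge n
    simp only [show (2:ℝ)^(n+1+2) = 4*2^(n+1) from by ring,
      show (2:ℝ)^(n+1+1) = 2*2^(n+1) from by ring,
      show (2:ℝ)^(n+2) = 2*2^(n+1) from by ring,
      show (2:ℝ)^(n+3) = 4*2^(n+1) from by ring]
    nlinarith [sq_nonneg ((2:ℝ)^(n+1))]

-- L4: Eng(K+1) - Eng K ≤ EngS(K+2) - EngS(K+1)
private lemma L4 (K : ℕ) (hK : 2 ≤ K) :
    Eng (K+1) - Eng K ≤ EngS (K+2) - EngS (K+1) := by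
  rcases cases4 K hK with rfl | rfl | ⟨n, rfl⟩ | ⟨n, rfl⟩
  · rw [eng2, eng3, engS3, engS4]
  · rw [eng3, eng4, engS4, engS5]; norm_num
  · rw [show 2*n+4+1 = 2*n+5 from rfl, show 2*n+4+2 = 2*(n+1)+4 from by ring,
      eng_even, eng_odd, engS_odd, engS_even]
    have hy := y_ge n
    simp only [show (2:ℝ)^(n+1+2) = 4*2^(n+1) from by ring,
      show (2:ℝ)^(n+1+1) = 2*2^(n+1) from by ring,
      show (2:ℝ)^(n+2) = 2*2^(n+1) from by ring,
      show (2:ℝ)^(n+3) = 4*2^(n+1) from by ring]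
    nlinarith [sq_nonneg ((2:ℝ)^(n+1))]
  · rw [show 2*n+5+1 = 2*(n+1)+4 from by ring, show 2*n+5+2 = 2*(n+1)+5 from by ring,
      eng_odd, eng_even, engS_even, engS_odd]
    have hy := y_ge n
    simp only [show (2:ℝ)^(n+1+2) = 4*2^(n+1) from by ring,
      show (2:ℝ)^(n+1+1) = 2*2^(n+1) from by ring,
      show (2:ℝ)^(n+2) = 2*2^(n+1) from by ring,
      show (2:ℝ)^(n+3) = 4*2^(n+1) from by ring]
    nlinarith [sq_nonneg ((2:ℝ)^(n+1))]

-- L5: convexity of EngS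
private lemma L5 (K : ℕ) (hK : 2 ≤ K) :
    EngS (K+1) - EngS K ≤ EngS (K+2) - EngS (K+1) := by
  rcases cases4 K hK with rfl | rfl | ⟨n, rfl⟩ | ⟨n, rfl⟩
  · rw [engS2, engS3, engS4]; norm_num
  · rw [engS3, engS4, engS5]; norm_num
  · rw [show 2*n+4+1 = 2*n+5 from rfl, show 2*n+4+2 = 2*(n+1)+4 from by ring,
      engS_even, engS_odd, engS_even]
    have hy := y_ge n
    simp only [show (2:ℝ)^(n+1+2) = 4*2^(n+1) from by ring,
      show (2:ℝ)^(n+1+1) = 2*2^(n+1) from by ring,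
      show (2:ℝ)^(n+2) = 2*2^(n+1) from by ring,
      show (2:ℝ)^(n+3) = 4*2^(n+1) from by ring]
    nlinarith [sq_nonneg ((2:ℝ)^(n+1))]
  · rw [show 2*n+5+1 = 2*(n+1)+4 from by ring, show 2*n+5+2 = 2*(n+1)+5 from by ring,
      engS_odd, engS_even, engS_odd]
    have hy := y_ge n
    simp only [show (2:ℝ)^(n+1+2) = 4*2^(n+1) from by ring,
      show (2:ℝ)^(n+1+1) = 2*2^(n+1) from by ring,
      show (2:ℝ)^(n+2) = 2*2^(n+1) from by ring,
      show (2:ℝ)^(n+3) = 4*2^(n+1) from by ring]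
    nlinarith [sq_nonneg ((2:ℝ)^(n+1))]

private lemma dE_mono (a b : ℕ) (ha : 2 ≤ a) (hab : a ≤ b) :
    Eng (a+1) - Eng a ≤ Eng (b+1) - Eng b := by
  induction b, hab using Nat.le_induction with
  | base => exact le_refl _
  | succ m hm ih => exact le_trans ih (L1 m (le_trans ha hm))

private lemma dS_mono (a b : ℕ) (ha : 2 ≤ a) (hab : a ≤ b) :
    EngS (a+1) - EngS a ≤ EngS (b+1) - EngS b := by
  induction b, hab using Nat.le_induction with
  | base => exact le_refl _
  | succ m hm ih => exact le_trans ih (L5 m (le_trans ha hm))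

private lemma entrywise : ∀ d u v : ℕ, u - v = d → 2 ≤ v → v ≤ u →
    Eng ((u + v + 1) / 2) + Eng ((u + v) / 2) ≤ Eng u + Eng v ∧
    Eng ((u + v + 1) / 2) + EngS ((u + v) / 2) ≤ Eng u + EngS v ∧
    Eng ((u + v + 1) / 2) + EngT ((u + v) / 2) ≤ Eng u + EngT v ∧
    Eng ((u + v) / 2) + EngS ((u + v + 1) / 2) ≤ Eng v + EngS u := by
  intro d
  induction d using Nat.strong_induction_on with
  | _ d ih =>
    intro u v hd hv hvu
    by_cases hle : u ≤ v + 1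
    · rw [show (u + v + 1) / 2 = u from by omega, show (u + v) / 2 = v from by omega]
      exact ⟨le_refl _, le_refl _, le_refl _, le_refl _⟩
    · have hu2 : v + 2 ≤ u := by omega
      obtain ⟨u', rfl⟩ : ∃ u', u = u' + 1 := ⟨u - 1, by omega⟩
      have hv1u : v + 1 ≤ u' := by omega
      have IH := ih (u' - (v+1)) (by omega) u' (v+1) rfl (by omega) (by omega)
      rw [show (u' + (v+1) + 1) / 2 = (u' + 1 + v + 1) / 2 from by omega,
          show (u' + (v+1)) / 2 = (u' + 1 + v) / 2 from by omega] at IH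
      obtain ⟨IA, IB, IC, ID⟩ := IH
      -- step inequalities
      have sA : Eng (v+1) - Eng v ≤ Eng (u'+1) - Eng u' :=
        dE_mono v u' hv (by omega)
      have sB : EngS (v+1) - EngS v ≤ Eng (u'+1) - Eng u' :=
        le_trans (L2 v hv) (by
          have := dE_mono (v+1) u' (by omega) hv1u
          rw [show v+1+1 = v+2 from rfl] at this
          exact this)
      have sC : EngT (v+1) - EngT v ≤ Eng (u'+1) - Eng u' :=
        le_trans (L3 v hv) (by
          have := dE_mono (v+1) u' (by omega) hv1u
          rw [show v+1+1 = v+2 from rfl] at this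
          exact this)
      have sD : Eng (v+1) - Eng v ≤ EngS (u'+1) - EngS u' :=
        le_trans (L4 v hv) (by
          have := dS_mono (v+1) u' (by omega) hv1u
          rw [show v+1+1 = v+2 from rfl] at this
          exact this)
      exact ⟨le_trans IA (by linarith), le_trans IB (by linarith),
        le_trans IC (by linarith), le_trans ID (by linarith)⟩

end Aux

/-- The balanced split of `w`: `(w+1)/2` and `w/2` (in natural-number
division), i.e. `(w/2, w/2)` for even `w` and `((w+1)/2, (w-1)/2)` for odd
`w`. Energy-sum inequalities showing the balanced split minimizes the
relevant energy sums (Lemma 4). -/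
theorem eng_balanced_split_min (u v : ℕ) (hv : 2 ≤ v) (hvu : v ≤ u) :
    Eng ((u + v + 1) / 2) + Eng ((u + v) / 2) ≤ Eng u + Eng v ∧
    Real.sqrt (Eng ((u + v + 1) / 2) + EngS ((u + v) / 2)) +
        Real.sqrt (Eng ((u + v + 1) / 2) + EngT ((u + v) / 2)) ≤
      Real.sqrt (Eng u + EngS v) + Real.sqrt (Eng u + EngT v) ∧
    Real.sqrt (Eng ((u + v + 1) / 2) + Eng ((u + v) / 2)) +
        Real.sqrt (Eng ((u + v + 1) / 2) + EngS ((u + v) / 2)) ≤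
      Real.sqrt (Eng u + Eng v) + Real.sqrt (Eng u + EngS v) ∧
    Real.sqrt (Eng ((u + v + 1) / 2) + EngS ((u + v) / 2)) +
        Real.sqrt (Eng ((u + v) / 2) + EngS ((u + v + 1) / 2)) ≤
      Real.sqrt (Eng u + EngS v) + Real.sqrt (Eng v + EngS u) := by
  obtain ⟨hA, hB, hC, hD⟩ := entrywise (u - v) u v rfl hv hvu
  exact ⟨hA, add_le_add (Real.sqrt_le_sqrt hB) (Real.sqrt_le_sqrt hC),
    add_le_add (Real.sqrt_le_sqrt hA) (Real.sqrt_le_sqrt hB),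
    add_le_add (Real.sqrt_le_sqrt hB) (Real.sqrt_le_sqrt hD)⟩
end

section
/- For all integers u ≥ v ≥ 2 and every real α > 0, the inequality 3·(1 + α²(E(u) + E_s(v)))·(1 + α²(E_s(u) + E(v))) ≥ (1 + α²(E(u) + E(v)))² holds. -/
lemma eng_key (K : ℕ) (h2 : 2 ≤ K) :
    0 ≤ EngS K ∧ EngS K ≤ Eng K ∧ (K ≠ 3 → Eng K ≤ 3 * EngS K) ∧ (4 ≤ K → 4 ≤ Eng K) := by
  rcases eq_or_ne K 2 with hK2 | hK2
  · subst hK2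
    simp only [Eng, EngS]
    norm_num
  rcases eq_or_ne K 3 with hK3 | hK3
  · subst hK3
    simp only [Eng, EngS]
    norm_num
  have h4 : 4 ≤ K := by omega
  rcases Nat.even_or_odd K with he | ho
  · have hmod : K % 2 = 0 := Nat.even_iff.mp he
    simp only [Eng, EngS, if_neg hK2, if_neg hK3, if_pos hmod]
    have hx : (4 : ℝ) ≤ 2 ^ (K / 2) := by
      calc (4 : ℝ) = 2 ^ 2 := by norm_num
      _ ≤ 2 ^ (K / 2) := pow_le_pow_right₀ (by norm_num) (by omega)
    set x : ℝ := 2 ^ (K / 2) with hxdef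
    refine ⟨by positivity, by nlinarith, fun _ => by nlinarith [sq_nonneg (x - 3)],
      fun _ => by nlinarith⟩
  · have hmod : ¬ K % 2 = 0 := by
      have := Nat.odd_iff.mp ho; omega
    simp only [Eng, EngS, if_neg hK2, if_neg hK3, if_neg hmod]
    have hK5 : 5 ≤ K := by
      rcases ho with ⟨t, ht⟩; omega
    have hm1 : (K - 1) / 2 = (K - 3) / 2 + 1 := by
      rcases ho with ⟨t, ht⟩; omega
    have hn2 : 1 ≤ (K - 3) / 2 := by
      rcases ho with ⟨t, ht⟩; omega
    have hy : (2 : ℝ) ≤ 2 ^ ((K - 3) / 2) := by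
      calc (2 : ℝ) = 2 ^ 1 := by norm_num
      _ ≤ 2 ^ ((K - 3) / 2) := pow_le_pow_right₀ (by norm_num) hn2
    have hxy : (2 : ℝ) ^ ((K - 1) / 2) = 2 * 2 ^ ((K - 3) / 2) := by
      rw [hm1, pow_succ]; ring
    set y : ℝ := 2 ^ ((K - 3) / 2) with hydef
    rw [hxy]
    refine ⟨by positivity, by nlinarith, fun _ => by nlinarith [sq_nonneg (2 * y - 3)],
      fun _ => by nlinarith⟩

/-- For `u ≥ v ≥ 2` and every `α > 0`,
`3 (1 + α²(E(u) + E_s(v))) (1 + α²(E_s(u) + E(v))) ≥ (1 + α²(E(u) + E(v)))²`. -/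
theorem eng_alpha_inequality (u v : ℕ) (hv : 2 ≤ v) (hvu : v ≤ u)
    (α : ℝ) (hα : 0 < α) :
    (1 + α ^ 2 * (Eng u + Eng v)) ^ 2 ≤
      3 * (1 + α ^ 2 * (Eng u + EngS v)) * (1 + α ^ 2 * (EngS u + Eng v)) := by
  have a := α ^ 2
  have ha : 0 < α ^ 2 := by positivity
  have hu2 : 2 ≤ u := le_trans hv hvu
  obtain ⟨hSu0, hSuE, hu3, hu4⟩ := eng_key u hu2
  obtain ⟨hSv0, hSvE, hv3, hv4⟩ := eng_key v hv
  have hEu0 : 0 ≤ Eng u := le_trans hSu0 hSuE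
  have hEv0 : 0 ≤ Eng v := le_trans hSv0 hSvE
  by_cases hu : u = 3
  · by_cases hvv : v = 3
    · subst hu; subst hvv
      simp only [Eng, EngS]
      norm_num
      nlinarith [sq_nonneg (α ^ 2), ha]
    · have hv2 : v = 2 := by omega
      subst hu; subst hv2
      simp only [Eng, EngS]
      norm_num
      nlinarith [sq_nonneg (α ^ 2), ha]
  · have hu3' := hu3 hu
    by_cases hvv : v = 3
    · have hu4' : 4 ≤ u := by omega
      have hEu4 := hu4 hu4'
      have hE3 : Eng 3 = 10 := by simp [Eng]
      have hS3 : EngS 3 = 2 := by simp [EngS]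
      subst hvv
      rw [hE3, hS3]
      have hQ : 0 ≤ 3 * (Eng u + 2) * (EngS u + 10) - (Eng u + 10) ^ 2 := by
        nlinarith
      nlinarith [mul_nonneg (mul_nonneg ha.le ha.le) hQ, mul_nonneg ha.le hSu0,
        mul_nonneg ha.le hEu0, ha]
    · have hv3' := hv3 hvv
      have hQ : 0 ≤ 3 * (Eng u + EngS v) * (EngS u + Eng v) - (Eng u + Eng v) ^ 2 := by
        nlinarith [mul_nonneg (sub_nonneg.2 hu3') (sub_nonneg.2 hv3'),
          mul_nonneg hSu0 hSv0, mul_nonneg hEu0 hEv0, sq_nonneg (Eng u - Eng v),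
          mul_nonneg hEu0 hSv0, mul_nonneg hSu0 hEv0]
      nlinarith [mul_nonneg (mul_nonneg ha.le ha.le) hQ, mul_nonneg ha.le hSu0,
        mul_nonneg ha.le hSv0, mul_nonneg ha.le hEu0, mul_nonneg ha.le hEv0, ha]
end
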